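/- arXiv:2202.11526 — 2 statements merged into one kernel-verified Lean document; each statement's English description precedes it below -/
import Mathlib

section
/- Let g : [0,∞) → [0,∞) be continuous and strictly increasing, let μ be Lebesgue measure on ℝ, let a ≥ 0, and let p be the Sugeno integral of g over [0,a] with respect to μ. Then g(a - p) ≥ p. Moreover, if 0 < p < a, then g(a - p) = p. -/
/-!
Write `p` for the Sugeno integral and `t = a - p`. If `g t < p`, right continuity gives some
`s ∈ (t, a)` with `g s < p`; every superlevel set `{α ≤ g}` with `α > g s` then lies in `(s, a]`,
so each term of the supremum is at most `max (g s) (a - s) < p`. If instead `0 < p < a` and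
`g t > p`, left continuity gives `x < t` with `g x > p`, and the superlevel set of `g x` contains
`[x, a]`, so the term at `α = g x` exceeds `p`.
-/

open MeasureTheory Set

/-- Sugeno integral of `f` over `A` w.r.t. measure `μ`:
`⨆_{α ≥ 0} min α (μ (A ∩ {x | f x ≥ α}))` (values taken in ℝ). -/
noncomputable def sugeno (μ : Measure ℝ) (A : Set ℝ) (f : ℝ → ℝ) : ℝ :=
  ⨆ α : {a : ℝ // 0 ≤ a}, min α.1 (μ (A ∩ {x | α.1 ≤ f x})).toReal

open Filter Topology

section General

variable {μ : Measure ℝ} {A : Set ℝ} {f : ℝ → ℝ}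

theorem le_sugeno (hA : μ A ≠ ⊤) {α : ℝ} (hα : 0 ≤ α) :
    min α (μ (A ∩ {x | α ≤ f x})).toReal ≤ sugeno μ A f := by
  refine le_ciSup (f := fun β : {b : ℝ // 0 ≤ b} => min β.1 (μ (A ∩ {x | β.1 ≤ f x})).toReal)
    ⟨(μ A).toReal, ?_⟩ ⟨α, hα⟩
  rintro _ ⟨β, rfl⟩
  exact (min_le_right _ _).trans (ENNReal.toReal_mono hA (measure_mono inter_subset_left))

theorem sugeno_le {b : ℝ} (h : ∀ α, 0 ≤ α → min α (μ (A ∩ {x | α ≤ f x})).toReal ≤ b) :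
    sugeno μ A f ≤ b :=
  ciSup_le fun α => h α.1 α.2

theorem sugeno_le_measure (hA : μ A ≠ ⊤) : sugeno μ A f ≤ (μ A).toReal :=
  sugeno_le fun _ _ =>
    (min_le_right _ _).trans (ENNReal.toReal_mono hA (measure_mono inter_subset_left))

end General

section Monotone

variable {g : ℝ → ℝ} {a : ℝ}

theorem sugeno_Icc_le (ha : 0 ≤ a) : sugeno volume (Icc 0 a) g ≤ a := by
  simpa [Real.volume_Icc, ha] using
    sugeno_le_measure (f := g) (measure_Icc_lt_top (μ := volume) (a := 0) (b := a)).ne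

theorem toReal_volume_superlevel_le (hg : MonotoneOn g (Ici 0)) {s α : ℝ} (hs : 0 ≤ s)
    (hsa : s ≤ a) (hα : g s < α) :
    (volume (Icc 0 a ∩ {x | α ≤ g x})).toReal ≤ a - s := by
  have hsub : Icc 0 a ∩ {x | α ≤ g x} ⊆ Ioc s a := by
    rintro x ⟨⟨hx0, hxa⟩, hαx⟩
    refine ⟨lt_of_not_ge fun hxs => ?_, hxa⟩
    exact (hα.trans_le hαx).not_ge (hg hx0 hs hxs)
  calc (volume (Icc 0 a ∩ {x | α ≤ g x})).toReal
      ≤ (volume (Ioc s a)).toReal := ENNReal.toReal_mono measure_Ioc_lt_top.ne (measure_mono hsub)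
    _ = a - s := by rw [Real.volume_Ioc, ENNReal.toReal_ofReal (sub_nonneg.2 hsa)]

theorem sub_le_toReal_volume_superlevel (hg : MonotoneOn g (Ici 0)) {x : ℝ} (hx : 0 ≤ x)
    (hxa : x ≤ a) : a - x ≤ (volume (Icc 0 a ∩ {y | g x ≤ g y})).toReal := by
  have hsub : Icc x a ⊆ Icc 0 a ∩ {y | g x ≤ g y} := fun y ⟨hxy, hya⟩ =>
    ⟨⟨hx.trans hxy, hya⟩, hg hx (hx.trans hxy) hxy⟩
  calc a - x = (volume (Icc x a)).toReal := by
        rw [Real.volume_Icc, ENNReal.toReal_ofReal (sub_nonneg.2 hxa)]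
    _ ≤ _ := ENNReal.toReal_mono
        (measure_ne_top_of_subset inter_subset_left measure_Icc_lt_top.ne) (measure_mono hsub)

theorem sugeno_Icc_le_apply_sub (ha : 0 ≤ a) (hg_cont : ContinuousOn g (Ici 0))
    (hg_mono : MonotoneOn g (Ici 0)) (hg_nonneg : ∀ x ∈ Ici (0 : ℝ), 0 ≤ g x) :
    sugeno volume (Icc 0 a) g ≤ g (a - sugeno volume (Icc 0 a) g) := by
  set p := sugeno volume (Icc 0 a) g
  by_contra! hlt
  have ht : 0 ≤ a - p := sub_nonneg.2 (sugeno_Icc_le ha)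
  have hta : a - p < a := sub_lt_self a ((hg_nonneg _ ht).trans_lt hlt)
  have hright : Tendsto g (𝓝[>] (a - p)) (𝓝 (g (a - p))) :=
    ((hg_cont _ ht).mono (Ioi_subset_Ici ht)).tendsto
  obtain ⟨s, hgs, hts, hsa⟩ :=
    ((hright.eventually_lt_const hlt).and (Ioo_mem_nhdsGT hta)).exists
  have hbound : p ≤ max (g s) (a - s) := sugeno_le fun α _ => by
    rcases le_or_gt α (g s) with hα | hα
    · exact (min_le_left _ _).trans (hα.trans (le_max_left _ _))
    · exact (min_le_right _ _).trans ((toReal_volume_superlevel_le hg_mono (ht.trans hts.le)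
        hsa.le hα).trans (le_max_right _ _))
  exact (max_lt hgs (by linarith)).not_ge hbound

theorem apply_sub_sugeno_Icc_le (hg_cont : ContinuousOn g (Ici 0))
    (hg_mono : MonotoneOn g (Ici 0)) (hp0 : 0 < sugeno volume (Icc 0 a) g)
    (hpa : sugeno volume (Icc 0 a) g < a) :
    g (a - sugeno volume (Icc 0 a) g) ≤ sugeno volume (Icc 0 a) g := by
  set p := sugeno volume (Icc 0 a) g
  by_contra! hlt
  have ht : 0 < a - p := sub_pos.2 hpa
  have hleft : Tendsto g (𝓝[<] (a - p)) (𝓝 (g (a - p))) :=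
    (hg_cont.continuousAt (Ici_mem_nhds ht)).tendsto.mono_left nhdsWithin_le_nhds
  obtain ⟨x, hgx, hx0, hxt⟩ :=
    ((hleft.eventually_const_lt hlt).and (Ioo_mem_nhdsLT ht)).exists
  have hterm : p < min (g x) (volume (Icc 0 a ∩ {y | g x ≤ g y})).toReal :=
    lt_min hgx ((by linarith : p < a - x).trans_le
      (sub_le_toReal_volume_superlevel hg_mono hx0.le (by linarith)))
  exact hterm.not_ge (le_sugeno measure_Icc_lt_top.ne (hp0.trans hgx).le)

end Monotone

theorem diaz_metcalf_stmt0 (g : ℝ → ℝ) (a : ℝ) (ha : 0 ≤ a)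
    (hg_cont : ContinuousOn g (Set.Ici 0))
    (hg_mono : StrictMonoOn g (Set.Ici 0))
    (hg_nonneg : ∀ x ∈ Set.Ici (0 : ℝ), 0 ≤ g x)
    (p : ℝ) (hp : p = sugeno volume (Set.Icc 0 a) g) :
    p ≤ g (a - p) ∧ (0 < p → p < a → g (a - p) = p) := by
  subst hp
  have hle := sugeno_Icc_le_apply_sub ha hg_cont hg_mono.monotoneOn hg_nonneg
  exact ⟨hle, fun hp0 hpa =>
    (apply_sub_sugeno_Icc_le hg_cont hg_mono.monotoneOn hp0 hpa).antisymm hle⟩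
end

section
/- Let f, g : [0,1] → [0,∞) be continuous functions that are both strictly increasing, let s > 1, and let μ be Lebesgue measure on ℝ. Then (Sugeno ∫₀¹ f^s dμ) · (Sugeno ∫₀¹ g^s dμ) ≤ Sugeno ∫₀¹ (f·g)^s dμ. -/
/-!
The upper level sets of two monotone functions on a subset of `ℝ` are nested, so the measure of
their intersection is the smaller of their measures. Hence for levels `α, β` the set where
`F G ≥ α β` has measure at least `min (μ {F ≥ α}) (μ {G ≥ β})`, and on a set of measure at most `1`
this gives `min α a * min β b ≤ min (α β) (min a b)` termwise; taking suprema over `α` and `β`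
yields the Chebyshev-type inequality for the Sugeno integral, which applies to `f ^ s` and `g ^ s`.
-/

open MeasureTheory Set

noncomputable def sugenoTerm (μ : Measure ℝ) (A : Set ℝ) (h : ℝ → ℝ) (α : ℝ) : ℝ :=
  min α (μ (A ∩ {x | α ≤ h x})).toReal

lemma MonotoneOn.inter_setOf_le_subset_total {ι κ : Type*} [LinearOrder ι] [Preorder κ]
    {A : Set ι} {F G : ι → κ} (hF : MonotoneOn F A) (hG : MonotoneOn G A) (a b : κ) :
    A ∩ {x | a ≤ F x} ⊆ A ∩ {x | b ≤ G x} ∨ A ∩ {x | b ≤ G x} ⊆ A ∩ {x | a ≤ F x} := by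
  by_contra! h
  obtain ⟨⟨x, ⟨hxA, hFx⟩, hx⟩, ⟨y, ⟨hyA, hGy⟩, hy⟩⟩ := And.imp not_subset.1 not_subset.1 h
  rcases le_total x y with hxy | hyx
  · exact hy ⟨hyA, hFx.trans (hF hxA hyA hxy)⟩
  · exact hx ⟨hxA, hGy.trans (hG hyA hxA hyx)⟩

lemma MeasureTheory.Measure.min_toReal_le_toReal_inter_of_total {Ω : Type*} [MeasurableSpace Ω]
    {μ : Measure Ω} {S T : Set Ω}
    (h : S ⊆ T ∨ T ⊆ S) : min (μ S).toReal (μ T).toReal ≤ (μ (S ∩ T)).toReal := by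
  rcases h with h | h
  · rw [inter_eq_left.2 h]; exact min_le_left _ _
  · rw [inter_eq_right.2 h]; exact min_le_right _ _

lemma min_mul_min_le_min_mul_min {α β a b : ℝ} (hα : 0 ≤ α) (hβ : 0 ≤ β) (ha : 0 ≤ a)
    (hb : 0 ≤ b) (ha1 : a ≤ 1) (hb1 : b ≤ 1) :
    min α a * min β b ≤ min (α * β) (min a b) := by
  have hp : 0 ≤ min α a := le_min hα ha
  have hq : 0 ≤ min β b := le_min hβ hb
  refine le_min (mul_le_mul (min_le_left _ _) (min_le_left _ _) hq hα) (le_min ?_ ?_)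
  · calc min α a * min β b ≤ min α a * 1 := by gcongr; exact (min_le_right _ _).trans hb1
      _ ≤ a := by rw [mul_one]; exact min_le_right _ _
  · calc min α a * min β b ≤ 1 * min β b := by gcongr; exact (min_le_right _ _).trans ha1
      _ ≤ b := by rw [one_mul]; exact min_le_right _ _

section Sugeno

variable {μ : Measure ℝ} {A : Set ℝ}

lemma sugeno_eq_iSup_sugenoTerm (h : ℝ → ℝ) :
    sugeno μ A h = ⨆ α : {a : ℝ // 0 ≤ a}, sugenoTerm μ A h α :=
  rfl

lemma sugenoTerm_nonneg (h : ℝ → ℝ) {α : ℝ} (hα : 0 ≤ α) : 0 ≤ sugenoTerm μ A h α :=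
  le_min hα ENNReal.toReal_nonneg

lemma sugeno_nonneg (h : ℝ → ℝ) : 0 ≤ sugeno μ A h :=
  Real.iSup_nonneg fun α => sugenoTerm_nonneg h α.2

lemma sugenoTerm_le_sugeno (hA : μ A ≠ ⊤) (h : ℝ → ℝ) {α : ℝ} (hα : 0 ≤ α) :
    sugenoTerm μ A h α ≤ sugeno μ A h := by
  rw [sugeno_eq_iSup_sugenoTerm]
  refine le_ciSup (f := fun α : {a : ℝ // 0 ≤ a} => sugenoTerm μ A h α) ⟨(μ A).toReal, ?_⟩ ⟨α, hα⟩
  rintro _ ⟨β, rfl⟩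
  exact (min_le_right _ _).trans (ENNReal.toReal_mono hA (measure_mono inter_subset_left))

lemma sugeno_mul_le_of_forall_sugenoTerm_mul_le {F G : ℝ → ℝ} {S : ℝ}
    (hS : ∀ α β, 0 ≤ α → 0 ≤ β → sugenoTerm μ A F α * sugenoTerm μ A G β ≤ S) :
    sugeno μ A F * sugeno μ A G ≤ S := by
  rw [sugeno_eq_iSup_sugenoTerm F, Real.iSup_mul_of_nonneg (sugeno_nonneg G)]
  refine ciSup_le fun α => ?_
  rw [sugeno_eq_iSup_sugenoTerm G, Real.mul_iSup_of_nonneg (sugenoTerm_nonneg F α.2)]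
  exact ciSup_le fun β => hS α β α.2 β.2

lemma sugeno_congr {h h' : ℝ → ℝ} (hh : EqOn h h' A) : sugeno μ A h = sugeno μ A h' := by
  have hlevel : ∀ α, A ∩ {x | α ≤ h x} = A ∩ {x | α ≤ h' x} := fun α =>
    ext fun x => and_congr_right fun hx => by simp only [mem_ofPred_eq, hh hx]
  simp only [sugeno, hlevel]

lemma sugenoTerm_mul_le (hA : μ A ≤ 1) {F G : ℝ → ℝ} (hF : MonotoneOn F A)
    (hG : MonotoneOn G A) (hF0 : ∀ x ∈ A, 0 ≤ F x) {α β : ℝ} (hα : 0 ≤ α) (hβ : 0 ≤ β) :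
    sugenoTerm μ A F α * sugenoTerm μ A G β ≤
      sugenoTerm μ A (fun x => F x * G x) (α * β) := by
  have hle_one : ∀ S ⊆ A, (μ S).toReal ≤ 1 := fun S hS =>
    ENNReal.toReal_le_of_le_ofReal zero_le_one (by simpa using (measure_mono hS).trans hA)
  have hfinite : μ (A ∩ {x | α * β ≤ F x * G x}) ≠ ⊤ :=
    ne_top_of_le_ne_top ENNReal.one_ne_top ((measure_mono inter_subset_left).trans hA)
  have hlevel : (A ∩ {x | α ≤ F x}) ∩ (A ∩ {x | β ≤ G x}) ⊆ A ∩ {x | α * β ≤ F x * G x} :=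
    fun x ⟨⟨hx, hFx⟩, _, hGx⟩ => ⟨hx, mul_le_mul hFx hGx hβ (hF0 x hx)⟩
  calc sugenoTerm μ A F α * sugenoTerm μ A G β
      ≤ min (α * β) (min (μ (A ∩ {x | α ≤ F x})).toReal (μ (A ∩ {x | β ≤ G x})).toReal) :=
        min_mul_min_le_min_mul_min hα hβ ENNReal.toReal_nonneg ENNReal.toReal_nonneg
          (hle_one _ inter_subset_left) (hle_one _ inter_subset_left)
    _ ≤ sugenoTerm μ A (fun x => F x * G x) (α * β) := by
        refine min_le_min_left _ ?_
        exact (Measure.min_toReal_le_toReal_inter_of_total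
          (hF.inter_setOf_le_subset_total hG α β)).trans
          (ENNReal.toReal_mono hfinite (measure_mono hlevel))

theorem sugeno_mul_le_sugeno_mul_of_monotoneOn (hA : μ A ≤ 1) {F G : ℝ → ℝ}
    (hF : MonotoneOn F A) (hG : MonotoneOn G A) (hF0 : ∀ x ∈ A, 0 ≤ F x) :
    sugeno μ A F * sugeno μ A G ≤ sugeno μ A (fun x => F x * G x) :=
  sugeno_mul_le_of_forall_sugenoTerm_mul_le fun _ _ hα hβ =>
    (sugenoTerm_mul_le hA hF hG hF0 hα hβ).trans <|
      sugenoTerm_le_sugeno (ne_top_of_le_ne_top ENNReal.one_ne_top hA) _ (mul_nonneg hα hβ)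

end Sugeno

theorem diaz_metcalf_sugeno_increasing_general (f g : ℝ → ℝ) (s : ℝ) (hs : 1 < s)
    (hf_mono : StrictMonoOn f (Set.Icc 0 1)) (hg_mono : StrictMonoOn g (Set.Icc 0 1))
    (hf_nonneg : ∀ x ∈ Set.Icc (0 : ℝ) 1, 0 ≤ f x)
    (hg_nonneg : ∀ x ∈ Set.Icc (0 : ℝ) 1, 0 ≤ g x) :
    sugeno volume (Set.Icc 0 1) (fun x => f x ^ s) *
      sugeno volume (Set.Icc 0 1) (fun x => g x ^ s) ≤
    sugeno volume (Set.Icc 0 1) (fun x => (f x * g x) ^ s) := by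
  have hs0 : 0 ≤ s := by linarith
  have hpow : ∀ u : ℝ → ℝ, StrictMonoOn u (Icc 0 1) → (∀ x ∈ Icc (0 : ℝ) 1, 0 ≤ u x) →
      MonotoneOn (fun x => u x ^ s) (Icc 0 1) := fun u hu hu0 x hx y hy hxy =>
    Real.rpow_le_rpow (hu0 x hx) (hu.monotoneOn hx hy hxy) hs0
  rw [sugeno_congr fun x hx => Real.mul_rpow (hf_nonneg x hx) (hg_nonneg x hx)]
  exact sugeno_mul_le_sugeno_mul_of_monotoneOn (by simp [Real.volume_Icc])
    (hpow f hf_mono hf_nonneg) (hpow g hg_mono hg_nonneg)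
    fun x hx => Real.rpow_nonneg (hf_nonneg x hx) s

theorem diaz_metcalf_sugeno_increasing (f g : ℝ → ℝ) (s : ℝ) (hs : 1 < s)
    (hf_cont : ContinuousOn f (Set.Icc 0 1)) (hg_cont : ContinuousOn g (Set.Icc 0 1))
    (hf_mono : StrictMonoOn f (Set.Icc 0 1)) (hg_mono : StrictMonoOn g (Set.Icc 0 1))
    (hf_nonneg : ∀ x ∈ Set.Icc (0 : ℝ) 1, 0 ≤ f x)
    (hg_nonneg : ∀ x ∈ Set.Icc (0 : ℝ) 1, 0 ≤ g x) :
    sugeno volume (Set.Icc 0 1) (fun x => f x ^ s) *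
      sugeno volume (Set.Icc 0 1) (fun x => g x ^ s) ≤
    sugeno volume (Set.Icc 0 1) (fun x => (f x * g x) ^ s) :=
  diaz_metcalf_sugeno_increasing_general f g s hs hf_mono hg_mono hf_nonneg hg_nonneg
end
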